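/- arXiv:2107.14001 — 8 statements merged into one kernel-verified Lean document; each statement's English description precedes it below -/
import Mathlib

section
/- Let θ be a real number, let ψ = (cos θ, sin θ) ∈ ℝ², let O be the 2×2 diagonal matrix diag(1, −1), and let R = 2·ψψᵀ − I. Then for every natural number k, applying the k-th power of the Grover iterate to the initial state gives ((R·O)^k)·ψ = (cos((2k+1)θ), sin((2k+1)θ)). -/
open Real Matrix

lemma grover_step (θ α : ℝ) (ψ : Fin 2 → ℝ) (hψ : ψ = ![Real.cos θ, Real.sin θ])
    (O : Matrix (Fin 2) (Fin 2) ℝ) (hO : O = Matrix.diagonal ![1, -1])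
    (R : Matrix (Fin 2) (Fin 2) ℝ) (hR : R = 2 • Matrix.vecMulVec ψ ψ - 1) :
    (R * O).mulVec ![Real.cos α, Real.sin α] = ![Real.cos (α + 2*θ), Real.sin (α + 2*θ)] := by
  subst hψ hO hR
  funext i
  fin_cases i
  · simp [Matrix.mulVec, Matrix.vecMulVec, Matrix.mul_apply, dotProduct,
      Fin.sum_univ_two, Matrix.one_apply, Real.cos_add, Real.sin_add,
      Real.cos_two_mul, Real.sin_two_mul, Matrix.diagonal]
    ring
  · simp [Matrix.mulVec, Matrix.vecMulVec, Matrix.mul_apply, dotProduct,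
      Fin.sum_univ_two, Matrix.one_apply, Real.cos_add, Real.sin_add,
      Real.cos_two_mul, Real.sin_two_mul, Matrix.diagonal]
    linear_combination (-2*Real.sin α) * Real.sin_sq_add_cos_sq θ

/-- `k` Grover iterations rotate the initial state `(cos θ, sin θ)` by angle
`2kθ`, so the state becomes `(cos ((2k+1)θ), sin ((2k+1)θ))`. -/
theorem grover_iterate_pow_apply (θ : ℝ)
    (ψ : Fin 2 → ℝ) (hψ : ψ = ![Real.cos θ, Real.sin θ])
    (O : Matrix (Fin 2) (Fin 2) ℝ) (hO : O = Matrix.diagonal ![1, -1])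
    (R : Matrix (Fin 2) (Fin 2) ℝ) (hR : R = 2 • Matrix.vecMulVec ψ ψ - 1) :
    ∀ k : ℕ, ((R * O) ^ k).mulVec ψ =
      ![Real.cos ((2 * k + 1) * θ), Real.sin ((2 * k + 1) * θ)] := by
  intro k
  induction k with
  | zero => simp [hψ]
  | succ n ih =>
    have h1 : ((R * O) ^ (n + 1)).mulVec ψ
        = (R * O).mulVec (((R * O) ^ n).mulVec ψ) := by
      rw [pow_succ', Matrix.mulVec_mulVec]
    rw [h1, ih, grover_step θ ((2 * n + 1) * θ) ψ hψ O hO R hR]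
    congr 1 <;> push_cast <;> ring_nf
end

section
/- For every natural number k and every index i ∈ Fin n, the i-th component of ((R·O)^k)·ψ equals √(π(i))/√Q · sin((2k+1)θ) if i ∈ W, and √(π(i))/√(1−Q) · cos((2k+1)θ) if i ∉ W. -/
/-!
Write `ψ = sin θ • u + cos θ • w`, where `u` and `w` are the normalised restrictions of `ψ` to
the rewarded and to the unrewarded sequences. They are orthonormal, `O` fixes `w` and negates
`u`, and `R` is the reflection in `ψ`; so `R * O` is the rotation by `2θ` of the plane they span,
and `k` iterations move `ψ`, at angle `θ`, to angle `(2k+1)θ`.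
-/

open Real Matrix Finset

theorem sin_add_two_mul_eq (α θ : ℝ) : sin (α + 2 * θ) = 2 * cos (α + θ) * sin θ + sin α := by
  rw [show α + 2 * θ = (α + θ) + θ by ring, sin_add, show sin α = sin ((α + θ) - θ) by ring_nf,
    sin_sub]
  ring

theorem cos_add_two_mul_eq (α θ : ℝ) : cos (α + 2 * θ) = 2 * cos (α + θ) * cos θ - cos α := by
  rw [show α + 2 * θ = (α + θ) + θ by ring, cos_add, show cos α = cos ((α + θ) - θ) by ring_nf,
    cos_sub]
  ring

section Rotation

variable {ι : Type*} [Fintype ι] [DecidableEq ι]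

theorem reflection_mul_oracle_mulVec {O : Matrix ι ι ℝ} {u w ψ : ι → ℝ}
    (huu : u ⬝ᵥ u = 1) (hww : w ⬝ᵥ w = 1) (huw : u ⬝ᵥ w = 0)
    (hOu : O *ᵥ u = -u) (hOw : O *ᵥ w = w) {θ : ℝ} (hψ : ψ = sin θ • u + cos θ • w) (α : ℝ) :
    ((2 • vecMulVec ψ ψ - 1) * O) *ᵥ (sin α • u + cos α • w) =
      sin (α + 2 * θ) • u + cos (α + 2 * θ) • w := by
  have hO : O *ᵥ (sin α • u + cos α • w) = -sin α • u + cos α • w := by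
    rw [mulVec_add, mulVec_smul, mulVec_smul, hOu, hOw, smul_neg, neg_smul]
  have hdot : ψ ⬝ᵥ (-sin α • u + cos α • w) = cos (α + θ) := by
    simp only [hψ, add_dotProduct, dotProduct_add, smul_dotProduct, dotProduct_smul, huu, hww,
      huw, dotProduct_comm w u, smul_eq_mul, cos_add]
    ring
  rw [← mulVec_mulVec, hO, sub_mulVec, one_mulVec, smul_mulVec, vecMulVec_mulVec, op_smul_eq_smul,
    hdot, sin_add_two_mul_eq, cos_add_two_mul_eq, hψ]
  module

theorem reflection_mul_oracle_pow_mulVec {O : Matrix ι ι ℝ} {u w ψ : ι → ℝ}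
    (huu : u ⬝ᵥ u = 1) (hww : w ⬝ᵥ w = 1) (huw : u ⬝ᵥ w = 0)
    (hOu : O *ᵥ u = -u) (hOw : O *ᵥ w = w) {θ : ℝ} (hψ : ψ = sin θ • u + cos θ • w) (k : ℕ) :
    ((2 • vecMulVec ψ ψ - 1) * O) ^ k *ᵥ ψ =
      sin ((2 * k + 1) * θ) • u + cos ((2 * k + 1) * θ) • w := by
  induction k with
  | zero => simp [hψ]
  | succ k ih =>
    rw [pow_succ', ← mulVec_mulVec, ih,
      reflection_mul_oracle_mulVec huu hww huw hOu hOw hψ]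
    push_cast
    ring_nf

end Rotation

section Amplitudes

variable {ι : Type*} [Fintype ι] [DecidableEq ι]

noncomputable def normalizedAmplitude (pr : ι → ℝ) (s : Finset ι) (i : ι) : ℝ :=
  if i ∈ s then √(pr i) / √(∑ j ∈ s, pr j) else 0

variable {pr : ι → ℝ} {s : Finset ι}

theorem normalizedAmplitude_dotProduct_self (hpr : ∀ i, 0 ≤ pr i) (hs : 0 < ∑ j ∈ s, pr j) :
    normalizedAmplitude pr s ⬝ᵥ normalizedAmplitude pr s = 1 := by
  have hsq (i : ι) : normalizedAmplitude pr s i * normalizedAmplitude pr s i =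
      if i ∈ s then pr i / ∑ j ∈ s, pr j else 0 := by
    unfold normalizedAmplitude
    split_ifs
    · rw [div_mul_div_comm, mul_self_sqrt (hpr i), mul_self_sqrt hs.le]
    · simp
  simp only [dotProduct, hsq, sum_ite_mem, univ_inter, ← sum_div]
  exact div_self hs.ne'

theorem normalizedAmplitude_dotProduct_of_disjoint {t : Finset ι} (h : Disjoint s t) :
    normalizedAmplitude pr s ⬝ᵥ normalizedAmplitude pr t = 0 := by
  refine sum_eq_zero fun i _ => ?_
  unfold normalizedAmplitude
  split_ifs with hs ht
  · exact absurd ht (disjoint_left.mp h hs)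
  all_goals simp

theorem diagonal_mulVec_normalizedAmplitude {d : ι → ℝ} {c : ℝ} (hd : ∀ i ∈ s, d i = c) :
    diagonal d *ᵥ normalizedAmplitude pr s = c • normalizedAmplitude pr s := by
  ext i
  rw [mulVec_diagonal, Pi.smul_apply, smul_eq_mul, normalizedAmplitude]
  split_ifs with hi
  · rw [hd i hi]
  · simp

theorem sqrt_eq_add_normalizedAmplitude (hs : 0 < ∑ j ∈ s, pr j) (hsc : 0 < ∑ j ∈ sᶜ, pr j)
    (i : ι) :
    √(pr i) = √(∑ j ∈ s, pr j) * normalizedAmplitude pr s i +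
      √(∑ j ∈ sᶜ, pr j) * normalizedAmplitude pr sᶜ i := by
  by_cases hi : i ∈ s
  · rw [normalizedAmplitude, normalizedAmplitude, if_pos hi, if_neg (notMem_compl.mpr hi),
      mul_zero, add_zero, mul_div_cancel₀ _ (sqrt_pos.mpr hs).ne']
  · rw [normalizedAmplitude, normalizedAmplitude, if_neg hi, if_pos (mem_compl.mpr hi),
      mul_zero, zero_add, mul_div_cancel₀ _ (sqrt_pos.mpr hsc).ne']

end Amplitudes

/-- Componentwise description of the state after `k` Grover iterations:
rewarded components share the factor `sin ((2k+1)θ)/√Q` and unrewarded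
components the factor `cos ((2k+1)θ)/√(1-Q)`. -/
theorem grover_pow_mulVec_apply (n : ℕ) (pr : Fin n → ℝ)
    (hpr : ∀ i, 0 ≤ pr i) (hsum : ∑ i, pr i = 1)
    (W : Finset (Fin n)) (Q : ℝ) (hQ : Q = ∑ i ∈ W, pr i)
    (hQpos : 0 < Q) (hQlt : Q < 1)
    (θ : ℝ) (hθ : θ = Real.arcsin (Real.sqrt Q))
    (ψ : Fin n → ℝ) (hψ : ∀ i, ψ i = Real.sqrt (pr i))
    (O : Matrix (Fin n) (Fin n) ℝ)
    (hO : O = Matrix.diagonal (fun i => if i ∈ W then (-1 : ℝ) else 1))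
    (R : Matrix (Fin n) (Fin n) ℝ) (hR : R = 2 • Matrix.vecMulVec ψ ψ - 1) :
    ∀ (k : ℕ) (i : Fin n),
      ((R * O) ^ k).mulVec ψ i =
        if i ∈ W then
          Real.sqrt (pr i) / Real.sqrt Q * Real.sin ((2 * k + 1) * θ)
        else
          Real.sqrt (pr i) / Real.sqrt (1 - Q) * Real.cos ((2 * k + 1) * θ) := by
  have hW : ∑ i ∈ W, pr i = Q := hQ.symm
  have hWc : ∑ i ∈ Wᶜ, pr i = 1 - Q := by
    rw [← hsum, ← sum_add_sum_compl W pr, hW, add_sub_cancel_left]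
  have hWpos : 0 < ∑ i ∈ W, pr i := hW ▸ hQpos
  have hWcpos : 0 < ∑ i ∈ Wᶜ, pr i := by linarith
  have hsin : sin θ = √Q := by
    rw [hθ, sin_arcsin (by linarith [sqrt_nonneg Q]) (sqrt_le_one.mpr hQlt.le)]
  have hcos : cos θ = √(1 - Q) := by
    rw [hθ, cos_arcsin, sq_sqrt hQpos.le]
  have hOu : O *ᵥ normalizedAmplitude pr W = -normalizedAmplitude pr W := by
    rw [hO, diagonal_mulVec_normalizedAmplitude (fun i hi => if_pos hi), neg_one_smul]
  have hOw : O *ᵥ normalizedAmplitude pr Wᶜ = normalizedAmplitude pr Wᶜ := by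
    rw [hO, diagonal_mulVec_normalizedAmplitude (fun i hi => if_neg (mem_compl.mp hi)), one_smul]
  have hψ' : ψ = sin θ • normalizedAmplitude pr W + cos θ • normalizedAmplitude pr Wᶜ := by
    ext i
    rw [hψ, sqrt_eq_add_normalizedAmplitude hWpos hWcpos i, hW, hWc, hsin, hcos]
    rfl
  intro k i
  rw [hR, reflection_mul_oracle_pow_mulVec (normalizedAmplitude_dotProduct_self hpr hWpos)
    (normalizedAmplitude_dotProduct_self hpr hWcpos)
    (normalizedAmplitude_dotProduct_of_disjoint disjoint_compl_right) hOu hOw hψ' k]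
  simp only [Pi.add_apply, Pi.smul_apply, smul_eq_mul, normalizedAmplitude, mem_compl, hW, hWc]
  split_ifs <;> ring
end

section
/- For every natural number k and every rewarded index w ∈ W, the measurement probabilities satisfy (((R·O)^k)·ψ)(w)² · Q = π(w) · sin²((2k+1)·arcsin(√Q)). In other words, amplitude amplification enhances the total winning probability from Q to sin²((2k+1)·arcsin(√Q)) but preserves the ratio π(w)/Q: conditioned on obtaining a reward, the distribution over rewarded action sequences is the same for the quantum-enhanced agent as for the classical agent. -/
open Real Matrix Finset

/-! With `u = ψ|_W / sin θ` and `v = ψ|_{Wᶜ} / cos θ` orthonormal and `ψ = sin θ • u + cos θ • v`,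
the oracle `O` reflects the plane spanned by `u, v` in `v` and `R` reflects it in `ψ`, so `R * O`
rotates it by `2θ`. Hence `(R * O)^k ψ = sin ((2k+1)θ) • u + cos ((2k+1)θ) • v`, whose entries on
`W` are those of `ψ` scaled by the common factor `sin ((2k+1)θ) / sin θ`. -/

section Grover

variable {ι : Type*} [Fintype ι] [DecidableEq ι]

theorem dotProduct_indicator_self (s : Finset ι) (x : ι → ℝ) :
    x ⬝ᵥ (s : Set ι).indicator x = ∑ i ∈ s, x i ^ 2 := by
  simp only [dotProduct, Set.indicator_apply, Finset.mem_coe, mul_ite, mul_zero,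
    Finset.sum_ite_mem, Finset.univ_inter, sq]

theorem diagonal_sign_mulVec_indicator (s : Finset ι) (x : ι → ℝ) :
    diagonal (fun i => if i ∈ s then (-1 : ℝ) else 1) *ᵥ (s : Set ι).indicator x =
      -(s : Set ι).indicator x := by
  ext i
  by_cases hi : i ∈ s <;> simp [mulVec_diagonal, hi]

theorem diagonal_sign_mulVec_indicator_compl (s : Finset ι) (x : ι → ℝ) :
    diagonal (fun i => if i ∈ s then (-1 : ℝ) else 1) *ᵥ ((sᶜ : Finset ι) : Set ι).indicator x =
      ((sᶜ : Finset ι) : Set ι).indicator x := by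
  ext i
  by_cases hi : i ∈ s <;> simp [mulVec_diagonal, hi]

theorem reflection_mulVec (ψ x : ι → ℝ) :
    (2 • vecMulVec ψ ψ - 1 : Matrix ι ι ℝ) *ᵥ x = (2 * (ψ ⬝ᵥ x)) • ψ - x := by
  rw [sub_mulVec, one_mulVec, smul_mulVec, vecMulVec_mulVec, op_smul_eq_smul]
  module

variable {ψ u v : ι → ℝ} {O : Matrix ι ι ℝ} {θ : ℝ}

theorem grover_mulVec_sin_smul_add_cos_smul (hu : O *ᵥ u = -u) (hv : O *ᵥ v = v)
    (hψ : ψ = sin θ • u + cos θ • v) (hψu : ψ ⬝ᵥ u = sin θ) (hψv : ψ ⬝ᵥ v = cos θ) (α : ℝ) :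
    ((2 • vecMulVec ψ ψ - 1) * O) *ᵥ (sin (α - θ) • u + cos (α - θ) • v) =
      sin (α + θ) • u + cos (α + θ) • v := by
  have hO : O *ᵥ (sin (α - θ) • u + cos (α - θ) • v) = -sin (α - θ) • u + cos (α - θ) • v := by
    rw [mulVec_add, mulVec_smul, mulVec_smul, hu, hv, smul_neg, neg_smul]
  have hinner : ψ ⬝ᵥ (-sin (α - θ) • u + cos (α - θ) • v) = cos α := by
    rw [dotProduct_add, dotProduct_smul, dotProduct_smul, hψu, hψv, smul_eq_mul, smul_eq_mul]
    calc -sin (α - θ) * sin θ + cos (α - θ) * cos θ = cos (α - θ + θ) := by rw [cos_add]; ring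
      _ = cos α := by rw [sub_add_cancel]
  have hsin : sin (α + θ) = 2 * cos α * sin θ + sin (α - θ) := by rw [sin_add, sin_sub]; ring
  have hcos : cos (α + θ) = 2 * cos α * cos θ - cos (α - θ) := by rw [cos_add, cos_sub]; ring
  rw [← mulVec_mulVec, hO, reflection_mulVec, hinner, hψ, hsin, hcos]
  module

theorem grover_pow_mulVec (hu : O *ᵥ u = -u) (hv : O *ᵥ v = v)
    (hψ : ψ = sin θ • u + cos θ • v) (hψu : ψ ⬝ᵥ u = sin θ) (hψv : ψ ⬝ᵥ v = cos θ) (k : ℕ) :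
    ((2 • vecMulVec ψ ψ - 1) * O) ^ k *ᵥ ψ =
      sin ((2 * k + 1) * θ) • u + cos ((2 * k + 1) * θ) • v := by
  induction k with
  | zero => simpa using hψ
  | succ k ih =>
    have hrot := grover_mulVec_sin_smul_add_cos_smul hu hv hψ hψu hψv ((2 * k + 2) * θ)
    rw [show (2 * k + 2) * θ - θ = (2 * k + 1) * θ by ring,
      show (2 * k + 2) * θ + θ = (2 * (k + 1 : ℕ) + 1) * θ by push_cast; ring] at hrot
    rw [pow_succ', ← mulVec_mulVec, ih, hrot]

theorem grover_pow_mulVec_apply_of_mem (hψ : ∑ i, ψ i ^ 2 = 1) {s : Finset ι}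
    (hs : ∑ i ∈ s, ψ i ^ 2 = sin θ ^ 2) (hsin : sin θ ≠ 0) (hcos : cos θ ≠ 0) (k : ℕ) {w : ι}
    (hw : w ∈ s) :
    (((2 • vecMulVec ψ ψ - 1) * diagonal (fun i => if i ∈ s then (-1 : ℝ) else 1)) ^ k *ᵥ ψ) w =
      sin ((2 * k + 1) * θ) / sin θ * ψ w := by
  set a := (s : Set ι).indicator ψ
  set b := ((sᶜ : Finset ι) : Set ι).indicator ψ
  have hsc : ∑ i ∈ sᶜ, ψ i ^ 2 = cos θ ^ 2 := by
    have hsplit := sum_add_sum_compl s (fun i => ψ i ^ 2)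
    rw [hψ, hs] at hsplit
    linarith [sin_sq_add_cos_sq θ]
  have hu : diagonal (fun i => if i ∈ s then (-1 : ℝ) else 1) *ᵥ (sin θ)⁻¹ • a =
      -((sin θ)⁻¹ • a) := by
    rw [mulVec_smul, diagonal_sign_mulVec_indicator, smul_neg]
  have hv : diagonal (fun i => if i ∈ s then (-1 : ℝ) else 1) *ᵥ (cos θ)⁻¹ • b =
      (cos θ)⁻¹ • b := by
    rw [mulVec_smul, diagonal_sign_mulVec_indicator_compl]
  have hψuv : ψ = sin θ • (sin θ)⁻¹ • a + cos θ • (cos θ)⁻¹ • b := by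
    rw [smul_inv_smul₀ hsin, smul_inv_smul₀ hcos]
    simp only [a, b, Finset.coe_compl, Set.indicator_self_add_compl]
  have hψu : ψ ⬝ᵥ (sin θ)⁻¹ • a = sin θ := by
    rw [dotProduct_smul, dotProduct_indicator_self, hs, smul_eq_mul]
    field_simp
  have hψv : ψ ⬝ᵥ (cos θ)⁻¹ • b = cos θ := by
    rw [dotProduct_smul, dotProduct_indicator_self, hsc, smul_eq_mul]
    field_simp
  rw [grover_pow_mulVec hu hv hψuv hψu hψv k]
  simp only [a, b, Pi.add_apply, Pi.smul_apply, smul_eq_mul, coe_compl, SetLike.mem_coe, hw,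
    Set.indicator_of_mem, Set.mem_compl_iff, not_true_eq_false, not_false_eq_true,
    Set.indicator_of_notMem, mul_zero, add_zero]
  field_simp

end Grover

theorem sin_arcsin_sqrt {Q : ℝ} (hQ₁ : Q ≤ 1) : sin (arcsin √Q) = √Q :=
  sin_arcsin (by linarith [sqrt_nonneg Q]) (sqrt_le_one.mpr hQ₁)

theorem cos_arcsin_sqrt {Q : ℝ} (hQ₀ : 0 ≤ Q) : cos (arcsin √Q) = √(1 - Q) := by
  rw [cos_arcsin, sq_sqrt hQ₀]

/-- Amplitude amplification preserves the conditional distribution over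
rewarded action sequences: for every rewarded index `w`, the measurement
probability satisfies `(((R·O)^k)·ψ)(w)² · Q = π(w) · sin²((2k+1)·arcsin √Q)`. -/
theorem grover_pow_preserves_conditional_distribution (n : ℕ) (pr : Fin n → ℝ)
    (hpr : ∀ i, 0 ≤ pr i) (hsum : ∑ i, pr i = 1)
    (W : Finset (Fin n)) (Q : ℝ) (hQ : Q = ∑ i ∈ W, pr i)
    (hQpos : 0 < Q) (hQlt : Q < 1)
    (ψ : Fin n → ℝ) (hψ : ∀ i, ψ i = Real.sqrt (pr i))
    (O : Matrix (Fin n) (Fin n) ℝ)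
    (hO : O = Matrix.diagonal (fun i => if i ∈ W then (-1 : ℝ) else 1))
    (R : Matrix (Fin n) (Fin n) ℝ) (hR : R = 2 • Matrix.vecMulVec ψ ψ - 1) :
    ∀ (k : ℕ) (w : Fin n), w ∈ W →
      (((R * O) ^ k).mulVec ψ w) ^ 2 * Q =
        pr w * Real.sin ((2 * k + 1) * Real.arcsin (Real.sqrt Q)) ^ 2 := by
  intro k w hw
  have hψsq (i : Fin n) : ψ i ^ 2 = pr i := by rw [hψ, sq_sqrt (hpr i)]
  have hsin := sin_arcsin_sqrt hQlt.le
  have hcos := cos_arcsin_sqrt (Q := Q) hQpos.le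
  have hsinQ : sin (arcsin √Q) ^ 2 = Q := by rw [hsin, sq_sqrt hQpos.le]
  have hW : ∑ i ∈ W, ψ i ^ 2 = sin (arcsin √Q) ^ 2 := by
    rw [hsinQ, hQ]
    exact sum_congr rfl fun i _ => hψsq i
  have hamp := grover_pow_mulVec_apply_of_mem (by simp only [hψsq, hsum]) hW
    (by rw [hsin]; positivity) (by rw [hcos]; exact (sqrt_pos.mpr (by linarith)).ne') k hw
  rw [hR, hO, hamp, mul_pow, div_pow, hsinQ, hψsq]
  field_simp
end

section
/- For every real Q with 0 < Q ≤ 1, the inequality 2Q < sin²(3·arcsin(√Q)) holds if and only if Q < (3 − √2)/4. Hence the turnover threshold below which a single Grover iteration (using α_o = 1 oracle epochs per iteration, i.e., 2 epochs total versus 1 classical epoch) yields rewards more frequently than classical sampling is exactly Q_max = (3 − √2)/4 ≈ 0.3964. -/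
open Real

/-- Turnover threshold: a single Grover iteration (2 epochs) finds rewards
more frequently than classical sampling, i.e. `2Q < G(Q,1) = sin²(3·arcsin √Q)`,
exactly when `Q < Q_max = (3 − √2)/4 ≈ 0.3964`. -/
theorem grover_turnover_threshold (Q : ℝ) (hQ0 : 0 < Q) (hQ1 : Q ≤ 1) :
    2 * Q < Real.sin (3 * Real.arcsin (Real.sqrt Q)) ^ 2 ↔
      Q < (3 - Real.sqrt 2) / 4 := by
  have hsq : Real.sqrt Q ^ 2 = Q := Real.sq_sqrt hQ0.le
  have h1 : Real.sqrt Q ≤ 1 := by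
    rw [show (1:ℝ) = Real.sqrt 1 by simp]
    exact Real.sqrt_le_sqrt hQ1
  have hm1 : (-1:ℝ) ≤ Real.sqrt Q := le_trans (by norm_num) (Real.sqrt_nonneg Q)
  have hsin : Real.sin (Real.arcsin (Real.sqrt Q)) = Real.sqrt Q :=
    Real.sin_arcsin hm1 h1
  have h3 : Real.sin (3 * Real.arcsin (Real.sqrt Q)) =
      Real.sqrt Q * (3 - 4 * Q) := by
    rw [Real.sin_three_mul, hsin]
    ring_nf
    nlinarith [hsq]
  rw [h3]
  have hG : (Real.sqrt Q * (3 - 4 * Q)) ^ 2 = Q * (3 - 4 * Q) ^ 2 := by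
    rw [mul_pow, hsq]
  rw [hG]
  have hs2 : Real.sqrt 2 ^ 2 = 2 := Real.sq_sqrt (by norm_num)
  have hs2pos : 1 < Real.sqrt 2 := by
    nlinarith [Real.sqrt_nonneg 2, hs2]
  constructor
  · intro h
    have h2 : 2 < (3 - 4 * Q) ^ 2 := by
      nlinarith
    by_contra hc
    push_neg at hc
    -- Q ≥ (3 - √2)/4, so 3 - 4Q ≤ √2; also 3 - 4Q ≥ -1 > -√2
    have hle : 3 - 4 * Q ≤ Real.sqrt 2 := by linarith
    have hge : -Real.sqrt 2 ≤ 3 - 4 * Q := by nlinarith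
    nlinarith [hs2]
  · intro h
    have hlt : Real.sqrt 2 < 3 - 4 * Q := by linarith
    have h2 : 2 < (3 - 4 * Q) ^ 2 := by nlinarith [hs2]
    nlinarith [mul_lt_mul_of_pos_left h2 hQ0]
end

section
/- Let Q be a real number with 0 < Q ≤ 1 and k a natural number such that (2k+1)·arcsin(√Q) ≤ π/2. Then the amplified winning probability satisfies sin²((2k+1)·arcsin(√Q)) ≥ (4/π²)·(2k+1)²·Q. -/
open Real

/-- Lower bound on the amplified winning probability:
`G(Q,k) = sin²((2k+1)·arcsin √Q) ≥ (4/π²)·(2k+1)²·Q` when `k` Grover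
iterations do not overshoot the quarter rotation. -/
theorem amplified_probability_lower_bound (Q : ℝ) (k : ℕ)
    (hQ0 : 0 < Q) (hQ1 : Q ≤ 1)
    (hk : (2 * k + 1) * Real.arcsin (Real.sqrt Q) ≤ Real.pi / 2) :
    Real.sin ((2 * k + 1) * Real.arcsin (Real.sqrt Q)) ^ 2 ≥
      4 / Real.pi ^ 2 * (2 * k + 1) ^ 2 * Q := by
  set θ := Real.arcsin (Real.sqrt Q) with hθ
  have hq0 : (0:ℝ) ≤ Real.sqrt Q := Real.sqrt_nonneg _
  have hq1 : Real.sqrt Q ≤ 1 := by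
    rw [show (1:ℝ) = Real.sqrt 1 by simp]
    exact Real.sqrt_le_sqrt hQ1
  have hθ0 : 0 ≤ θ := Real.arcsin_nonneg.2 hq0
  have hsinθ : Real.sin θ = Real.sqrt Q :=
    Real.sin_arcsin (by linarith) hq1
  have hθge : Real.sqrt Q ≤ θ := by
    have := Real.sin_le hθ0
    linarith [hsinθ ▸ this]
  set x := (2 * (k:ℝ) + 1) * θ with hx
  have hx0 : 0 ≤ x := by positivity
  have hjordan : 2 / Real.pi * x ≤ Real.sin x := Real.mul_le_sin hx0 hk
  have hj0 : 0 ≤ 2 / Real.pi * x := by positivity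
  have hsq : (2 / Real.pi * x) ^ 2 ≤ Real.sin x ^ 2 :=
    pow_le_pow_left₀ hj0 hjordan 2
  have hθsq : Q ≤ θ ^ 2 := by
    nlinarith [Real.sq_sqrt hQ0.le]
  have hx2 : (2 * (k:ℝ) + 1) ^ 2 * Q ≤ x ^ 2 := by
    rw [hx, mul_pow]
    exact mul_le_mul_of_nonneg_left hθsq (by positivity)
  have hmain : 4 / Real.pi ^ 2 * (2 * (k:ℝ) + 1) ^ 2 * Q ≤ (2 / Real.pi * x) ^ 2 := by
    rw [mul_pow, div_pow, mul_assoc]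
    have h4 : (2:ℝ) ^ 2 / Real.pi ^ 2 = 4 / Real.pi ^ 2 := by norm_num
    rw [h4]
    exact mul_le_mul_of_nonneg_left hx2 (by positivity)
  linarith
end

section
/- Let α_o ≥ 1 be a real number, let k ≥ 1 be a natural number, and let Q be a real number with 0 < Q ≤ 1 such that arcsin(√Q) ≤ π/(2(2k+1)). Then the expected number of epochs per reward of the hybrid agent is bounded by (α_o·k + 1)/sin²((2k+1)·arcsin(√Q)) ≤ (α_o·π²/(16·k))·(1/Q); that is, the hybrid agent's expected interval time satisfies ⟨t⟩_q ≤ (α_o·π²/(16·k_max))·⟨t⟩_c, where ⟨t⟩_c = 1/Q is the classical expected interval time. -/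
open Real

/-- Per-interval bound for the hybrid agent with limited coherence: with
`k = k_max` coherent Grover iterations, the expected number of epochs per
reward satisfies `⟨t⟩_q = (α_o·k+1)/G(Q,k) ≤ (α_o·π²/(16k))·(1/Q) =
(α_o·π²/(16k))·⟨t⟩_c`. -/
theorem hybrid_interval_time_bound (αo : ℝ) (hαo : 1 ≤ αo) (k : ℕ) (hk : 1 ≤ k)
    (Q : ℝ) (hQ0 : 0 < Q) (hQ1 : Q ≤ 1)
    (hsat : Real.arcsin (Real.sqrt Q) ≤ Real.pi / (2 * (2 * k + 1))) :
    (αo * k + 1) / Real.sin ((2 * k + 1) * Real.arcsin (Real.sqrt Q)) ^ 2 ≤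
      αo * Real.pi ^ 2 / (16 * k) * (1 / Q) := by
  set θ := Real.arcsin (Real.sqrt Q) with hθ
  have hsq0 : 0 < Real.sqrt Q := Real.sqrt_pos.mpr hQ0
  have hsq1 : Real.sqrt Q ≤ 1 := by
    rw [show (1:ℝ) = Real.sqrt 1 by simp]; exact Real.sqrt_le_sqrt hQ1
  have hθ0 : 0 < θ := Real.arcsin_pos.mpr hsq0
  have hsinθ : Real.sin θ = Real.sqrt Q := Real.sin_arcsin (by linarith [hsq0.le]) hsq1
  have hk1 : (1:ℝ) ≤ (k:ℝ) := by exact_mod_cast hk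
  have hc : (0:ℝ) < 2 * k + 1 := by linarith
  have hx0 : 0 ≤ (2 * (k:ℝ) + 1) * θ := by positivity
  have hx2 : (2 * (k:ℝ) + 1) * θ ≤ Real.pi / 2 := by
    have := hsat
    rw [div_mul_eq_div_div] at this
    calc (2 * (k:ℝ) + 1) * θ ≤ (2 * k + 1) * (Real.pi / 2 / (2 * k + 1)) := by
          apply mul_le_mul_of_nonneg_left _ hc.le
          simpa [div_div] using hsat
      _ = Real.pi / 2 := by field_simp
  have hjordan : 2 / Real.pi * ((2 * k + 1) * θ) ≤ Real.sin ((2 * k + 1) * θ) :=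
    Real.mul_le_sin hx0 hx2
  have hθge : Real.sqrt Q ≤ θ := by
    rw [← hsinθ]; exact Real.sin_le hθ0.le
  have hπ : (0:ℝ) < Real.pi := Real.pi_pos
  have hlb : 2 / Real.pi * ((2 * k + 1) * Real.sqrt Q) ≤ Real.sin ((2 * k + 1) * θ) := by
    refine le_trans ?_ hjordan
    have : (2 * (k:ℝ) + 1) * Real.sqrt Q ≤ (2 * k + 1) * θ :=
      mul_le_mul_of_nonneg_left hθge hc.le
    apply mul_le_mul_of_nonneg_left this
    positivity
  have hlb0 : 0 < 2 / Real.pi * ((2 * k + 1) * Real.sqrt Q) := by positivity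
  have hs0 : 0 < Real.sin ((2 * k + 1) * θ) := lt_of_lt_of_le hlb0 hlb
  have hsq : (2 / Real.pi * ((2 * k + 1) * Real.sqrt Q)) ^ 2 ≤
      Real.sin ((2 * k + 1) * θ) ^ 2 := by
    exact pow_le_pow_left₀ hlb0.le hlb 2
  have hsqQ : Real.sqrt Q ^ 2 = Q := Real.sq_sqrt hQ0.le
  -- (αo k + 1)/s² ≤ (αo k + 1)/((2/π)²(2k+1)²Q)
  have h1 : (αo * k + 1) / Real.sin ((2 * k + 1) * θ) ^ 2 ≤
      (αo * k + 1) / ((2 / Real.pi * ((2 * k + 1) * Real.sqrt Q)) ^ 2) := by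
    apply div_le_div_of_nonneg_left _ (by positivity) hsq
    nlinarith
  refine h1.trans ?_
  rw [mul_pow, mul_pow, hsqQ, div_pow]
  rw [div_le_iff₀ (by positivity)]
  have key : (αo * k + 1) * (16 * k) ≤ αo * Real.pi ^ 2 * (2 ^ 2 / Real.pi ^ 2 * ((2 * k + 1) ^ 2)) := by
    have : αo * Real.pi ^ 2 * (2 ^ 2 / Real.pi ^ 2 * ((2 * k + 1) ^ 2)) =
        αo * 4 * (2 * k + 1) ^ 2 := by field_simp; ring
    rw [this]; nlinarith
  have hQinv : αo * Real.pi ^ 2 / (16 * k) * (1 / Q) * (2 ^ 2 / Real.pi ^ 2 * ((2 * k + 1) ^ 2 * Q))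
      = αo * Real.pi ^ 2 * (2 ^ 2 / Real.pi ^ 2 * ((2 * k + 1) ^ 2)) / (16 * k) := by
    field_simp
  rw [hQinv, le_div_iff₀ (by positivity)]
  linarith [key]
end

section
/- Abstract form of Theorem 2 (quadratic speedup in learning time): Let H be a finite type (the set of rewarded histories), let p : H → ℝ be nonnegative with ∑_{h} p h = 1, let J : H → ℕ, let t : H → ℕ → ℝ be nonnegative (t h j is the classical expected duration of the j-th interval), let α ≥ 0 be real, and let T_q : H → ℝ satisfy T_q h ≤ α · ∑_{j < J h} √(t h j) for every h. Define T_c h = ∑_{j < J h} t h j. Then the average quantum learning time obeys ∑_{h} p h · T_q h ≤ α · √((∑_{h} p h · (J h)) · (∑_{h} p h · T_c h)); i.e., ⟨T⟩_q ≤ α·√(⟨J⟩·⟨T⟩_c). -/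
open Real Finset

/-!
Two applications of Cauchy–Schwarz. Within a history, `∑_{j<J} √t_j ≤ √J · √T_c`; averaging over
histories with weights `p h`, `∑ p √J √T_c ≤ √(⟨J⟩ · ⟨T⟩_c)`.
-/

namespace Real

variable {ι : Type*}

theorem sum_sqrt_le_sqrt_card_mul_sqrt_sum (s : Finset ι) {f : ι → ℝ} (hf : ∀ i, 0 ≤ f i) :
    ∑ i ∈ s, √(f i) ≤ √(#s : ℝ) * √(∑ i ∈ s, f i) := by
  simpa using sum_sqrt_mul_sqrt_le s (f := fun _ ↦ (1 : ℝ)) (fun _ ↦ zero_le_one) hf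

theorem sum_mul_sqrt_mul_sqrt_le_sqrt_mul (s : Finset ι) {w a b : ι → ℝ}
    (hw : ∀ i, 0 ≤ w i) (ha : ∀ i, 0 ≤ a i) (hb : ∀ i, 0 ≤ b i) :
    ∑ i ∈ s, w i * (√(a i) * √(b i)) ≤ √((∑ i ∈ s, w i * a i) * (∑ i ∈ s, w i * b i)) := by
  have hsplit (i : ι) : w i * (√(a i) * √(b i)) = √(w i * a i) * √(w i * b i) := by
    rw [sqrt_mul (hw i), sqrt_mul (hw i)]
    linear_combination (-(√(a i) * √(b i))) * mul_self_sqrt (hw i)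
  simp only [hsplit]
  rw [sqrt_mul (sum_nonneg fun i _ ↦ mul_nonneg (hw i) (ha i))]
  exact sum_sqrt_mul_sqrt_le s (fun i ↦ mul_nonneg (hw i) (ha i))
    (fun i ↦ mul_nonneg (hw i) (hb i))

end Real

theorem hybrid_quadratic_speedup_general (H : Type*) [Fintype H]
    (p : H → ℝ) (hp : ∀ h, 0 ≤ p h)
    (J : H → ℕ) (t : H → ℕ → ℝ) (ht : ∀ h j, 0 ≤ t h j)
    (α : ℝ) (hα : 0 ≤ α)
    (Tq : H → ℝ)
    (hTq : ∀ h, Tq h ≤ α * ∑ j ∈ Finset.range (J h), Real.sqrt (t h j))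
    (Tc : H → ℝ) (hTc : ∀ h, Tc h = ∑ j ∈ Finset.range (J h), t h j) :
    ∑ h : H, p h * Tq h ≤
      α * Real.sqrt ((∑ h : H, p h * (J h : ℝ)) * (∑ h : H, p h * Tc h)) := by
  have hTq_le (h : H) : Tq h ≤ α * (√(J h : ℝ) * √(Tc h)) := by
    have := sum_sqrt_le_sqrt_card_mul_sqrt_sum (range (J h)) (ht h)
    rw [card_range, ← hTc h] at this
    exact (hTq h).trans (mul_le_mul_of_nonneg_left this hα)
  have hTc_nonneg (h : H) : 0 ≤ Tc h := hTc h ▸ sum_nonneg fun j _ ↦ ht h j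
  calc ∑ h, p h * Tq h ≤ ∑ h, p h * (α * (√(J h : ℝ) * √(Tc h))) :=
        sum_le_sum fun h _ ↦ mul_le_mul_of_nonneg_left (hTq_le h) (hp h)
    _ = α * ∑ h, p h * (√(J h : ℝ) * √(Tc h)) := by
        rw [mul_sum]
        exact sum_congr rfl fun h _ ↦ by ring
    _ ≤ α * √((∑ h, p h * (J h : ℝ)) * ∑ h, p h * Tc h) :=
        mul_le_mul_of_nonneg_left
          (sum_mul_sqrt_mul_sqrt_le_sqrt_mul _ hp (fun h ↦ Nat.cast_nonneg _) hTc_nonneg) hα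

/-- Abstract form of Theorem 2 (quadratic speedup in learning time):
if the hybrid agent's expected learning time for each rewarded history `h`
satisfies `T_q h ≤ α·∑_{j<J h} √(t h j)` and the classical learning time is
`T_c h = ∑_{j<J h} t h j`, then `⟨T⟩_q ≤ α·√(⟨J⟩·⟨T⟩_c)`. -/
theorem hybrid_quadratic_speedup (H : Type*) [Fintype H]
    (p : H → ℝ) (hp : ∀ h, 0 ≤ p h) (hpsum : ∑ h : H, p h = 1)
    (J : H → ℕ) (t : H → ℕ → ℝ) (ht : ∀ h j, 0 ≤ t h j)
    (α : ℝ) (hα : 0 ≤ α)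
    (Tq : H → ℝ)
    (hTq : ∀ h, Tq h ≤ α * ∑ j ∈ Finset.range (J h), Real.sqrt (t h j))
    (Tc : H → ℝ) (hTc : ∀ h, Tc h = ∑ j ∈ Finset.range (J h), t h j) :
    ∑ h : H, p h * Tq h ≤
      α * Real.sqrt ((∑ h : H, p h * (J h : ℝ)) * (∑ h : H, p h * Tc h)) :=
  hybrid_quadratic_speedup_general H p hp J t ht α hα Tq hTq Tc hTc
end

section
/- Abstract form of Theorem 3 (linear speedup with limited coherence): Let H be a finite type, let p : H → ℝ be nonnegative with ∑_h p h = 1, let J : H → ℕ, let α_o ≥ 1 be real, let k ≥ 1 be a natural number, and let Q : H → ℕ → ℝ satisfy 0 < Q h j ≤ 1 and arcsin(√(Q h j)) ≤ π/(2(2k+1)) for all h and all j < J h. Define T_q h = ∑_{j < J h} (α_o·k + 1)/sin²((2k+1)·arcsin(√(Q h j))) and T_c h = ∑_{j < J h} 1/(Q h j). Then ∑_h p h · T_q h ≤ (α_o·π²/(16·k)) · ∑_h p h · T_c h; i.e., ⟨T⟩_q ≤ (α_o·π²/(16·k_max))·⟨T⟩_c. -/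
open Real Finset

/-!
Since `sin θ ≤ θ`, the Grover angle `θ = arcsin √Q` satisfies `θ ≥ √Q`, and the saturation
hypothesis keeps `(2k+1)θ` in `[0, π/2]`, where Jordan's inequality `sin x ≥ 2x/π` holds. Hence
`G(Q,k) ≥ 4(2k+1)²Q/π²`, so each interval of the hybrid agent costs at most
`π²(α_o k+1)/(4(2k+1)²Q)`, and `(α_o k+1)/(2k+1)² ≤ α_o/(4k)` turns this into `α_o π²/(16k)` times
the classical cost `1/Q`. Averaging over histories preserves the interval-wise inequality.
-/

lemma le_arcsin_self {y : ℝ} (hy0 : 0 ≤ y) (hy1 : y ≤ 1) : y ≤ arcsin y := by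
  simpa only [sin_arcsin (by linarith) hy1] using sin_le (arcsin_nonneg.2 hy0)

lemma sq_mul_le_sin_mul_arcsin_sqrt_sq {Q a : ℝ} (hQ0 : 0 ≤ Q) (hQ1 : Q ≤ 1) (ha : 0 ≤ a)
    (hsat : a * arcsin √Q ≤ π / 2) :
    (2 / π) ^ 2 * a ^ 2 * Q ≤ sin (a * arcsin √Q) ^ 2 := by
  have hθ : √Q ≤ arcsin √Q := le_arcsin_self (sqrt_nonneg Q) (sqrt_le_one.2 hQ1)
  have hjordan : 2 / π * (a * √Q) ≤ sin (a * arcsin √Q) :=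
    calc 2 / π * (a * √Q) ≤ 2 / π * (a * arcsin √Q) := by gcongr
      _ ≤ sin (a * arcsin √Q) := mul_le_sin (mul_nonneg ha (arcsin_nonneg.2 (sqrt_nonneg Q))) hsat
  calc (2 / π) ^ 2 * a ^ 2 * Q = (2 / π * (a * √Q)) ^ 2 := by
        rw [mul_pow, mul_pow, sq_sqrt hQ0, mul_assoc]
    _ ≤ sin (a * arcsin √Q) ^ 2 := pow_le_pow_left₀ (by positivity) hjordan 2

lemma mul_add_one_div_sq_le {α k : ℝ} (hα : 1 ≤ α) (hk : 0 < k) :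
    (α * k + 1) / (2 * k + 1) ^ 2 ≤ α / (4 * k) := by
  rw [div_le_div_iff₀ (by positivity) (by positivity)]
  nlinarith

lemma hybrid_interval_time_le {α Q k : ℝ} (hα : 1 ≤ α) (hk : 0 < k) (hQ0 : 0 < Q) (hQ1 : Q ≤ 1)
    (hsat : arcsin √Q ≤ π / (2 * (2 * k + 1))) :
    (α * k + 1) / sin ((2 * k + 1) * arcsin √Q) ^ 2 ≤ α * π ^ 2 / (16 * k) * (1 / Q) := by
  have hG : (2 / π) ^ 2 * (2 * k + 1) ^ 2 * Q ≤ sin ((2 * k + 1) * arcsin √Q) ^ 2 := by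
    refine sq_mul_le_sin_mul_arcsin_sqrt_sq hQ0.le hQ1 (by positivity) ?_
    calc (2 * k + 1) * arcsin √Q ≤ (2 * k + 1) * (π / (2 * (2 * k + 1))) := by gcongr
      _ = π / 2 := by field_simp
  calc (α * k + 1) / sin ((2 * k + 1) * arcsin √Q) ^ 2
      ≤ (α * k + 1) / ((2 / π) ^ 2 * (2 * k + 1) ^ 2 * Q) :=
        div_le_div_of_nonneg_left (by positivity) (by positivity) hG
    _ = π ^ 2 / (4 * Q) * ((α * k + 1) / (2 * k + 1) ^ 2) := by
        field_simp
        ring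
    _ ≤ π ^ 2 / (4 * Q) * (α / (4 * k)) :=
        mul_le_mul_of_nonneg_left (mul_add_one_div_sq_le hα hk) (by positivity)
    _ = α * π ^ 2 / (16 * k) * (1 / Q) := by
        field_simp
        ring

theorem hybrid_linear_speedup_limited_coherence_general (H : Type*) [Fintype H]
    (p : H → ℝ) (hp : ∀ h, 0 ≤ p h)
    (J : H → ℕ) (αo : ℝ) (hαo : 1 ≤ αo) (k : ℕ) (hk : 1 ≤ k)
    (Q : H → ℕ → ℝ)
    (hQ0 : ∀ h, ∀ j < J h, 0 < Q h j) (hQ1 : ∀ h, ∀ j < J h, Q h j ≤ 1)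
    (hsat : ∀ h, ∀ j < J h,
      Real.arcsin (Real.sqrt (Q h j)) ≤ Real.pi / (2 * (2 * k + 1)))
    (Tq : H → ℝ)
    (hTq : ∀ h, Tq h = ∑ j ∈ Finset.range (J h),
      (αo * k + 1) /
        Real.sin ((2 * k + 1) * Real.arcsin (Real.sqrt (Q h j))) ^ 2)
    (Tc : H → ℝ)
    (hTc : ∀ h, Tc h = ∑ j ∈ Finset.range (J h), 1 / Q h j) :
    ∑ h : H, p h * Tq h ≤
      αo * Real.pi ^ 2 / (16 * k) * ∑ h : H, p h * Tc h := by
  have hk0 : (0 : ℝ) < k := by exact_mod_cast hk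
  have hhistory : ∀ h, Tq h ≤ αo * π ^ 2 / (16 * k) * Tc h := by
    intro h
    rw [hTq, hTc, mul_sum]
    refine sum_le_sum fun j hj => ?_
    rw [mem_range] at hj
    exact hybrid_interval_time_le hαo hk0 (hQ0 h j hj) (hQ1 h j hj) (hsat h j hj)
  calc ∑ h : H, p h * Tq h ≤ ∑ h : H, p h * (αo * π ^ 2 / (16 * k) * Tc h) :=
        sum_le_sum fun h _ => mul_le_mul_of_nonneg_left (hhistory h) (hp h)
    _ = αo * π ^ 2 / (16 * k) * ∑ h : H, p h * Tc h := by
        rw [mul_sum]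
        exact sum_congr rfl fun h _ => mul_left_comm _ _ _

/-- Abstract form of Theorem 3 (linear speedup with limited coherence):
with at most `k = k_max` coherent Grover iterations, the average hybrid
learning time obeys `⟨T⟩_q ≤ (α_o·π²/(16·k_max))·⟨T⟩_c`. -/
theorem hybrid_linear_speedup_limited_coherence (H : Type*) [Fintype H]
    (p : H → ℝ) (hp : ∀ h, 0 ≤ p h) (hpsum : ∑ h : H, p h = 1)
    (J : H → ℕ) (αo : ℝ) (hαo : 1 ≤ αo) (k : ℕ) (hk : 1 ≤ k)
    (Q : H → ℕ → ℝ)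
    (hQ0 : ∀ h, ∀ j < J h, 0 < Q h j) (hQ1 : ∀ h, ∀ j < J h, Q h j ≤ 1)
    (hsat : ∀ h, ∀ j < J h,
      Real.arcsin (Real.sqrt (Q h j)) ≤ Real.pi / (2 * (2 * k + 1)))
    (Tq : H → ℝ)
    (hTq : ∀ h, Tq h = ∑ j ∈ Finset.range (J h),
      (αo * k + 1) /
        Real.sin ((2 * k + 1) * Real.arcsin (Real.sqrt (Q h j))) ^ 2)
    (Tc : H → ℝ)
    (hTc : ∀ h, Tc h = ∑ j ∈ Finset.range (J h), 1 / Q h j) :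
    ∑ h : H, p h * Tq h ≤
      αo * Real.pi ^ 2 / (16 * k) * ∑ h : H, p h * Tc h :=
  hybrid_linear_speedup_limited_coherence_general H p hp J αo hαo k hk Q hQ0 hQ1 hsat Tq hTq Tc hTc
end
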